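/- arXiv:2006.15923 — 3 statements merged into one kernel-verified Lean document; each statement's English description precedes it below -/
import Mathlib

section
/- An element w of a free group F has infinite imprimitivity rank (i.e., there is no finitely generated subgroup of F containing w in which w fails to be primitive) if and only if w is a primitive element of F, that is, w belongs to some free basis of F. -/
universe u

/-- `w` is a *primitive* element of the subgroup `H`: it is a member of some free basis of `H`. -/
def IsPrimitiveIn {F : Type u} [Group F] (H : Subgroup F) (w : F) : Prop :=
  ∃ (S : Type u) (b : FreeGroupBasis S H) (i : S), (b i : F) = w

/-- `w` is a primitive element of the group `F`: it is a member of some free basis of `F`. -/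
def IsPrimitive {F : Type u} [Group F] (w : F) : Prop :=
  ∃ (S : Type u) (b : FreeGroupBasis S F) (i : S), b i = w

/-- The imprimitivity rank of `w`: the minimal rank of a finitely generated subgroup of `F`
containing `w` in which `w` is not primitive, or `∞` if no such subgroup exists. -/
noncomputable def irank {F : Type u} [Group F] (w : F) : ℕ∞ :=
  sInf {n : ℕ∞ | ∃ m : ℕ, n = (m : ℕ∞) ∧ ∃ H : Subgroup F,
    Nonempty (FreeGroupBasis (Fin m) H) ∧ w ∈ H ∧ ¬ IsPrimitiveIn H w}

/-!
If `w = b i` for a basis `b` of `F` and `w ∈ H`, run the Nielsen–Schreier construction for `H`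
with respect to `b`: the action groupoid of `F` on `F ⧸ H` is free on the arrows `b j : c ⟶ b j • c`,
and the vertex group at the trivial coset, which is `H`, is free on the loops through a spanning
tree of the arrows outside it. Since `b i` fixes the trivial coset, it labels a loop there, and a
tree contains no loops, so `b i` itself is one of these free generators of `H`.
Conversely, a finitely generated free group `F` has a finite basis, so `F` itself is a
candidate in the infimum defining `irank w`.
-/
namespace FreeGroupBasis

variable {G ι : Type*} [Group G] {H : Type*} [Group H]

@[simp]
theorem lift_apply_basis (b : FreeGroupBasis ι G) (f : ι → H) (i : ι) : b.lift f (b i) = f i := by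
  simp [repr_apply_coe]

theorem existsUnique_lift (b : FreeGroupBasis ι G) (f : ι → H) :
    ∃! F : G →* H, ∀ i, F (b i) = f i :=
  ⟨b.lift f, b.lift_apply_basis f, fun F hF => b.ext_hom _ _ fun i => by simp [hF]⟩

theorem ofUniqueLift_apply {G X : Type u} [Group G] (of : X → G)
    (h : ∀ {H : Type u} [Group H] (f : X → H), ∃! F : G →* H, ∀ a, F (of a) = f a) (x : X) :
    ofUniqueLift X of @h x = of x := by
  change (ofUniqueLift X of @h).repr.symm (FreeGroup.of x) = of x
  simp [ofUniqueLift, ofLift]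

end FreeGroupBasis

open CategoryTheory CategoryTheory.ActionCategory CategoryTheory.SingleObj Quiver

namespace IsFreeGroupoid

-- Mathlib's `actionGroupoidIsFree` labels the generating arrows by the arbitrarily chosen
-- `IsFreeGroup.Generators G`; here they are labelled by the basis `b`.
abbrev ofFreeGroupBasis {G ι A : Type u} [Group G] [MulAction G A] (b : FreeGroupBasis ι G) :
    IsFreeGroupoid (ActionCategory G A) where
  quiverGenerators := ⟨fun a a' => { i : ι // b i • a.back = a'.back }⟩
  of := fun i => ⟨b i.1, i.2⟩
  unique_lift := by
    intro X _ f
    let f' : ι → (A → X) ⋊[mulAutArrow] G := fun i =>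
      ⟨fun a => @f ⟨(), _⟩ ⟨(), a⟩ ⟨i, smul_inv_smul _ a⟩, b i⟩
    obtain ⟨F', hF', uF'⟩ := b.existsUnique_lift f'
    refine ⟨uncurry F' ?_, ?_, ?_⟩
    · suffices SemidirectProduct.rightHom.comp F' = MonoidHom.id _ from
        DFunLike.ext_iff.mp this
      exact b.ext_hom _ _ fun i => by simp [hF', f']
    · rintro ⟨⟨⟩, a : A⟩ ⟨⟨⟩, a'⟩ ⟨i, h : b i • a = a'⟩
      change (F' (b i)).left _ = _
      rw [hF']
      cases inv_smul_eq_iff.mpr h.symm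
      rfl
    · intro E hE
      have : curry E = F' := by
        apply uF'
        intro e
        ext
        · convert! hE _ _ _
          rfl
        · rfl
      apply Functor.hext
      · intro
        apply Unit.ext
      · refine ActionCategory.cases ?_
        intros
        subst this
        rfl

end IsFreeGroupoid

theorem Quiver.Arborescence.isEmpty_loop {V : Type*} [Quiver V] [Arborescence V] (a : V) :
    IsEmpty (a ⟶ a) := by
  refine ⟨fun e => ?_⟩
  have h := congrArg Path.length
    (Subsingleton.elim (Path.cons default e) (default : Path (Quiver.root V) a))
  simp at h

namespace IsFreeGroupoid.SpanningTree

open IsFreeGroupoid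

variable {G : Type u} [Groupoid.{u} G] [IsFreeGroupoid G]
  (T : WideSubquiver (Symmetrify <| Generators G)) [Arborescence T]

theorem loop_notMem_wideSubquiverSymmetrify {a : Generators G} (e : a ⟶ a) :
    e ∉ wideSubquiverSymmetrify T a a := by
  rintro (h | h)
  · exact (Arborescence.isEmpty_loop (V := T) a).false ⟨_, h⟩
  · exact (Arborescence.isEmpty_loop (V := T) a).false ⟨_, h⟩

-- `SpanningTree.root'` is private.
def treeRoot : G := Quiver.root T

theorem loopOfHom_treeRoot (p : End (treeRoot T)) : loopOfHom T p = p := by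
  have h : treeHom T (treeRoot T) = 𝟙 (treeRoot T) := treeHom_root T
  simp only [loopOfHom, h]
  exact (by simp : 𝟙 (treeRoot T) ≫ p ≫ inv (𝟙 (treeRoot T)) = p)

-- Mathlib's `endIsFree` only asserts that this vertex group is free; the basis is needed here.
open scoped Classical in
noncomputable def endBasis :
    FreeGroupBasis ((wideSubquiverEquivSetTotal <| wideSubquiverSymmetrify T)ᶜ : Set _)
      (End (treeRoot T)) :=
  FreeGroupBasis.ofUniqueLift _ (fun e => loopOfHom T (of e.val.hom)) (by
    intro X _ f
    let f' : Labelling (Generators G) X := fun a b e =>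
      if h : e ∈ wideSubquiverSymmetrify T a b then 1 else f ⟨⟨a, b, e⟩, h⟩
    obtain ⟨F', hF', uF'⟩ := unique_lift f'
    refine ⟨F'.mapEnd _, ?_, ?_⟩
    · suffices ∀ {x y} (q : x ⟶ y), F'.map (loopOfHom T q) = (F'.map q : X) by
        rintro ⟨⟨a, b, e⟩, h⟩
        erw [Functor.mapEnd_apply, this, hF']
        exact dif_neg h
      intro x y q
      suffices ∀ {a} (p : Path (Quiver.root T) a), F'.map (homOfPath T p) = 1 by
        simp only [treeHom, comp_as_mul, inv_as_inv, loopOfHom, Functor.map_inv,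
          Functor.map_comp]
        erw [this, this]
        exact (by simp : (1 : X)⁻¹ * F'.map q * 1 = F'.map q)
      intro a p
      induction p with
      | nil => exact F'.map_id _
      | cons p e ih =>
        erw [homOfPath.eq_2, F'.map_comp, comp_as_mul, ih, mul_one]
        rcases e with ⟨e | e, eT⟩
        · erw [hF']
          exact dif_pos (Or.inl eT)
        · erw [F'.map_inv, inv_as_inv, inv_eq_one, hF']
          exact dif_pos (Or.inr eT)
    · intro E hE
      ext x
      suffices h : (functorOfMonoidHom T E).map x = F'.map x by
        change E (loopOfHom T x) = _ at h
        rwa [loopOfHom_treeRoot] at h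
      congr
      apply uF'
      intro a b e
      change E (loopOfHom T _) = dite _ _ _
      split_ifs with h
      · rw [loopOfHom_eq_id T e h, ← End.one_def]
        exact E.map_one
      · exact hE ⟨⟨a, b, e⟩, h⟩)

theorem endBasis_apply (e) : endBasis T e = loopOfHom T (of e.val.hom) :=
  FreeGroupBasis.ofUniqueLift_apply _ _ e

end IsFreeGroupoid.SpanningTree

open IsFreeGroupoid IsFreeGroupoid.SpanningTree in
theorem FreeGroupBasis.isPrimitiveIn_of_mem {G ι : Type u} [Group G] (b : FreeGroupBasis ι G)
    {H : Subgroup G} {i : ι} (hi : b i ∈ H) : IsPrimitiveIn H (b i) := by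
  let _ := IsFreeGroupoid.ofFreeGroupBasis (A := G ⧸ H) b
  let Γ := ActionCategory G (G ⧸ H)
  let r : Γ := objEquiv G (G ⧸ H) ((1 : G) : G ⧸ H)
  -- `inferInstanceAs` matches the category structure of `ActionCategory` with the groupoid one.
  have : RootedConnected (show Symmetrify (Generators Γ) from r) :=
    @generators_connected Γ _ (inferInstanceAs (CategoryTheory.IsConnected Γ)) _ r
  let T := geodesicSubtree (show Symmetrify (Generators Γ) from r)
  have hloop : b i • ((1 : G) : G ⧸ H) = ((1 : G) : G ⧸ H) := by
    rw [MulAction.Quotient.smul_mk, QuotientGroup.eq]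
    simpa using inv_mem hi
  let e : (show Generators Γ from r) ⟶ (show Generators Γ from r) := ⟨i, hloop⟩
  let j : ((wideSubquiverEquivSetTotal <| wideSubquiverSymmetrify T)ᶜ : Set _) :=
    ⟨⟨_, _, e⟩, loop_notMem_wideSubquiverSymmetrify T e⟩
  have hj : endBasis T j = of e := (endBasis_apply T j).trans (loopOfHom_treeRoot T _)
  exact ⟨_, (endBasis T).map (endMulEquivSubgroup H), j,
    congrArg (fun p => (endMulEquivSubgroup H p : G)) hj⟩

theorem IsPrimitive.isPrimitiveIn {F : Type u} [Group F] {w : F} (hw : IsPrimitive w)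
    {H : Subgroup F} (hH : w ∈ H) : IsPrimitiveIn H w := by
  obtain ⟨S, b, i, rfl⟩ := hw
  exact b.isPrimitiveIn_of_mem hH

theorem irank_eq_top_of_isPrimitive {F : Type u} [Group F] {w : F} (hw : IsPrimitive w) :
    irank w = ⊤ := by
  rw [irank, sInf_eq_top]
  rintro _ ⟨m, rfl, H, -, hH, hnp⟩
  exact absurd (hw.isPrimitiveIn hH) hnp

theorem FreeGroupBasis.finite_of_fg {G ι : Type*} [Group G] [Group.FG G]
    (b : FreeGroupBasis ι G) : Finite ι := by
  have : Group.FG (Abelianization (FreeGroup ι)) :=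
    Group.fg_of_surjective (f := Abelianization.of.comp b.repr.toMonoidHom)
      (QuotientGroup.mk_surjective.comp b.repr.surjective)
  have : AddGroup.FG (FreeAbelianGroup ι) := GroupFG.iff_add_fg.mp this
  have : Module.Finite ℤ (FreeAbelianGroup ι) := Module.Finite.iff_addGroup_fg.mpr this
  exact Module.Finite.finite_basis
    (Finsupp.basisSingleOne.map (FreeAbelianGroup.equivFinsupp ι).toIntLinearEquiv.symm)

theorem isPrimitiveIn_top_iff {F : Type u} [Group F] {w : F} :
    IsPrimitiveIn (⊤ : Subgroup F) w ↔ IsPrimitive w := by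
  constructor
  · rintro ⟨S, b, i, rfl⟩
    exact ⟨S, b.map Subgroup.topEquiv, i, rfl⟩
  · rintro ⟨S, b, i, rfl⟩
    exact ⟨S, b.map Subgroup.topEquiv.symm, i, rfl⟩

theorem irank_le_of_not_isPrimitiveIn {F : Type u} [Group F] {w : F} {m : ℕ} {H : Subgroup F}
    (b : FreeGroupBasis (Fin m) H) (hw : w ∈ H) (hnp : ¬ IsPrimitiveIn H w) : irank w ≤ m :=
  sInf_le ⟨m, rfl, H, ⟨b⟩, hw, hnp⟩

theorem irank_ne_top_of_not_isPrimitive {F : Type u} [Group F] [IsFreeGroup F] [Group.FG F]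
    {w : F} (hw : ¬ IsPrimitive w) : irank w ≠ ⊤ := by
  obtain ⟨S, ⟨b⟩⟩ := IsFreeGroup.nonempty_basis (G := F)
  have : Finite S := b.finite_of_fg
  refine ne_top_of_le_ne_top (ENat.natCast_ne_top (Nat.card S)) (irank_le_of_not_isPrimitiveIn
    ((b.reindex (Finite.equivFin S)).map Subgroup.topEquiv.symm) trivial ?_)
  rwa [isPrimitiveIn_top_iff]

/-- An element of a (finitely generated) free group has infinite imprimitivity rank iff it is a
primitive element of the free group. -/
theorem irank_eq_top_iff {F : Type u} [Group F] [IsFreeGroup F] [Group.FG F] (w : F) :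
    irank w = ⊤ ↔ IsPrimitive w :=
  ⟨fun h => by_contra fun hw => irank_ne_top_of_not_isPrimitive hw h,
    irank_eq_top_of_isPrimitive⟩
end

section
/- Let G1 and G2 be finitely generated groups. The free product G1 * G2 is hyperbolic if and only if both G1 and G2 are hyperbolic. -/
/-!
If `r ∘ i = id` for `i : H →* G`, `r : G →* H`, and `φ : F(X) → G` presents `G` with linear area,
lift `i ∘ r` to an endomorphism `σ` of `F(X)`. Then `r ∘ φ` presents `H` with the relators of `G`
together with the `x σ(x)⁻¹`: a relation `w` of `H` splits as `(w σ(w)⁻¹) σ(w)`, a product of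
`|w|` conjugates of new relators followed by a relation of `G` of length `O(|w|)`. Both factors
are retracts of `G₁ ∗ G₂`.

Conversely, present `G₁ ∗ G₂` on `X₁ ⊕ X₂` with the union of the relators. By the normal form
theorem, a nonempty word that is trivial in `G₁ ∗ G₂` contains a nonempty subword over a single
`Xᵢ` that is trivial in `Gᵢ`; it has area linear in its length, and deleting it leaves a shorter
trivial word, so induction on the length gives a linear bound.
-/

/-- A group is hyperbolic if it admits a finite presentation with a linear isoperimetric
(Dehn) function: every word in the kernel of the presentation map is a product of a number of
conjugates of relators or their inverses that is linearly bounded in terms of its word length. -/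
def IsHyperbolic (G : Type*) [Group G] : Prop :=
  ∃ (X : Type) (_ : Finite X) (_ : DecidableEq X) (φ : FreeGroup X →* G)
    (R : Finset (FreeGroup X)) (C D : ℕ),
    Function.Surjective φ ∧
    φ.ker = Subgroup.normalClosure (R : Set (FreeGroup X)) ∧
    ∀ w ∈ φ.ker, ∃ l : List (FreeGroup X),
      w = l.prod ∧ l.length ≤ C * w.toWord.length + D ∧
      ∀ g ∈ l, ∃ r ∈ R, ∃ c : FreeGroup X, g = c * r * c⁻¹ ∨ g = c * r⁻¹ * c⁻¹

namespace List

variable {α β : Type*}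

def consSyllable : α ⊕ β → List (List α ⊕ List β) → List (List α ⊕ List β)
  | .inl a, .inl K :: S => .inl (a :: K) :: S
  | .inl a, S => .inl [a] :: S
  | .inr b, .inr K :: S => .inr (b :: K) :: S
  | .inr b, S => .inr [b] :: S

/-- The maximal blocks of consecutive letters from a single summand. -/
def syllables (L : List (α ⊕ β)) : List (List α ⊕ List β) :=
  L.foldr consSyllable []

theorem flatMap_syllables (L : List (α ⊕ β)) :
    L.syllables.flatMap (Sum.elim (map .inl) (map .inr)) = L := by
  induction L with
  | nil => rfl
  | cons x L ih =>
    change (consSyllable x L.syllables).flatMap _ = _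
    generalize L.syllables = S at ih
    subst ih
    rcases x with a | b <;> rcases S with _ | ⟨K | K, S⟩ <;> simp [consSyllable]

theorem nil_notMem_syllables (L : List (α ⊕ β)) :
    .inl [] ∉ L.syllables ∧ .inr [] ∉ L.syllables := by
  induction L with
  | nil => simp [syllables]
  | cons x L ih =>
    change _ ∉ consSyllable x L.syllables ∧ _ ∉ consSyllable x L.syllables
    generalize L.syllables = S at ih
    rcases x with a | b <;> rcases S with _ | ⟨K | K, S⟩ <;> simp_all [consSyllable]

theorem isChain_syllables (L : List (α ⊕ β)) :
    L.syllables.IsChain fun s t => s.isLeft ≠ t.isLeft := by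
  induction L with
  | nil => exact isChain_nil
  | cons x L ih =>
    change (consSyllable x L.syllables).IsChain _
    generalize L.syllables = S at ih
    rcases x with a | b <;> rcases S with _ | ⟨K | K, S⟩ <;>
      simp_all [consSyllable, isChain_cons]

end List

namespace Monoid.Coprod

universe u v

/-- The normal form theorem for `G ∗ H`, read off from the reduced words of `CoprodI` over
`Bool`, with both factors lifted to a common universe. -/
theorem prod_ne_one_of_isChain {G : Type u} {H : Type v} [Group G] [Group H] {l : List (G ⊕ H)}
    (hl : l ≠ []) (h₁ : .inl 1 ∉ l) (h₂ : .inr 1 ∉ l)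
    (hch : l.IsChain fun x y => x.isLeft ≠ y.isLeft) :
    (l.map (Sum.elim inl inr)).prod ≠ 1 := by
  classical
  let M : Bool → Type (max u v) := fun b => cond b (ULift.{v} G) (ULift.{u} H)
  let _ : ∀ b, Group (M b) := fun
    | true => (inferInstance : Group (ULift G))
    | false => (inferInstance : Group (ULift H))
  let σ : G ⊕ H → Σ b, M b := Sum.elim (fun g => ⟨true, ULift.up g⟩) (fun h => ⟨false, ULift.up h⟩)
  let ι : G ∗ H →* CoprodI M :=
    lift ((CoprodI.of (i := true)).comp MulEquiv.ulift.symm.toMonoidHom)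
      ((CoprodI.of (i := false)).comp MulEquiv.ulift.symm.toMonoidHom)
  let w : CoprodI.Word M :=
    { toList := l.map σ
      ne_one := by
        simp only [List.mem_map]
        rintro _ ⟨x | x, hx, rfl⟩ h
        · exact h₁ (by rwa [show x = 1 from congrArg ULift.down h] at hx)
        · exact h₂ (by rwa [show x = 1 from congrArg ULift.down h] at hx)
      chain_ne := by
        refine List.isChain_map_of_isChain σ (fun x y hxy => ?_) hch
        rcases x with x | x <;> rcases y with y | y <;> simp_all [σ] }
  intro h
  have hw : w.prod = CoprodI.Word.empty.prod := by
    rw [CoprodI.Word.prod_empty, ← map_one ι, ← h, map_list_prod, List.map_map]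
    simp only [CoprodI.Word.prod, w, List.map_map]
    congr 1
    refine List.map_congr_left fun x _ => ?_
    rcases x with x | x <;> rfl
  exact hl (List.map_eq_nil_iff.1 (congrArg CoprodI.Word.toList
    (CoprodI.Word.equiv.symm.injective hw : w = CoprodI.Word.empty)))

theorem exists_trivial_syllable {G H A B : Type*} [Group G] [Group H] (f : A → G) (g : B → H)
    {L : List (A ⊕ B)} (hL : L ≠ []) (h : (L.map (Sum.elim (inl ∘ f) (inr ∘ g))).prod = 1) :
    ∃ P Q, (∃ K, K ≠ [] ∧ L = P ++ K.map .inl ++ Q ∧ (K.map f).prod = 1) ∨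
      (∃ K, K ≠ [] ∧ L = P ++ K.map .inr ++ Q ∧ (K.map g).prod = 1) := by
  by_contra! hno
  have hsplit : ∀ s ∈ L.syllables, ∃ P Q, L = P ++ Sum.elim (.map .inl) (.map .inr) s ++ Q := by
    intro s hs
    obtain ⟨S₁, S₂, hS⟩ := List.append_of_mem hs
    refine ⟨S₁.flatMap (Sum.elim (.map .inl) (.map .inr)),
      S₂.flatMap (Sum.elim (.map .inl) (.map .inr)), ?_⟩
    conv_lhs => rw [← L.flatMap_syllables, hS]
    simp
  let val : List A ⊕ List B → G ⊕ H := Sum.map (fun K => (K.map f).prod) (fun K => (K.map g).prod)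
  refine prod_ne_one_of_isChain (l := L.syllables.map val) ?_ ?_ ?_ ?_ ?_
  · rw [Ne, List.map_eq_nil_iff]
    rintro hS
    exact hL (by rw [← L.flatMap_syllables, hS]; rfl)
  · simp only [List.mem_map, not_exists, not_and]
    rintro (K | K) hK hval <;>
      simp only [val, Sum.map_inl, Sum.map_inr, reduceCtorEq, Sum.inl.injEq] at hval
    obtain ⟨P, Q, hPQ⟩ := hsplit _ hK
    exact (hno P Q).1 K (by rintro rfl; exact L.nil_notMem_syllables.1 hK) hPQ hval
  · simp only [List.mem_map, not_exists, not_and]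
    rintro (K | K) hK hval <;>
      simp only [val, Sum.map_inl, Sum.map_inr, reduceCtorEq, Sum.inr.injEq] at hval
    obtain ⟨P, Q, hPQ⟩ := hsplit _ hK
    exact (hno P Q).2 K (by rintro rfl; exact L.nil_notMem_syllables.2 hK) hPQ hval
  · exact List.isChain_map_of_isChain val (fun s t hst => by simpa [val] using hst)
      L.isChain_syllables
  · rw [← h]
    conv_rhs => rw [← L.flatMap_syllables]
    rw [List.flatMap, List.map_flatten, List.prod_flatten, List.map_map, List.map_map, List.map_map]
    congr 1
    refine List.map_congr_left fun s _ => ?_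
    rcases s with K | K <;> simp [val, map_list_prod]

end Monoid.Coprod

section Area

variable {F F' : Type*} [Group F] [Group F'] {R R' : Set F} {m n : ℕ} {u v w : F}

def AreaLE (R : Set F) (n : ℕ) (w : F) : Prop :=
  ∃ l : List F, w = l.prod ∧ l.length ≤ n ∧
    ∀ g ∈ l, ∃ r ∈ R, ∃ c : F, g = c * r * c⁻¹ ∨ g = c * r⁻¹ * c⁻¹

namespace AreaLE

theorem one : AreaLE R n 1 :=
  ⟨[], rfl, Nat.zero_le n, by simp⟩

theorem of_mem {r : F} (hr : r ∈ R) : AreaLE R 1 r :=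
  ⟨[r], by simp, le_rfl, by simpa using ⟨r, hr, 1, by simp⟩⟩

theorem mono (hR : R ⊆ R') (hn : m ≤ n) (h : AreaLE R m w) : AreaLE R' n w := by
  obtain ⟨l, rfl, hl, hc⟩ := h
  refine ⟨l, rfl, hl.trans hn, fun g hg => ?_⟩
  obtain ⟨r, hr, c, hc⟩ := hc g hg
  exact ⟨r, hR hr, c, hc⟩

theorem mul (hv : AreaLE R m v) (hw : AreaLE R n w) : AreaLE R (m + n) (v * w) := by
  obtain ⟨l, rfl, hl, hc⟩ := hv
  obtain ⟨l', rfl, hl', hc'⟩ := hw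
  refine ⟨l ++ l', by simp, by simpa using Nat.add_le_add hl hl', ?_⟩
  simp only [List.mem_append]
  rintro g (hg | hg)
  exacts [hc g hg, hc' g hg]

theorem inv (h : AreaLE R n w) : AreaLE R n w⁻¹ := by
  obtain ⟨l, rfl, hl, hc⟩ := h
  refine ⟨(l.map (·⁻¹)).reverse, List.prod_inv_reverse l, by simpa using hl, ?_⟩
  simp only [List.mem_reverse, List.mem_map]
  rintro _ ⟨g, hg, rfl⟩
  obtain ⟨r, hr, c, rfl | rfl⟩ := hc g hg
  exacts [⟨r, hr, c, Or.inr (by group)⟩, ⟨r, hr, c, Or.inl (by group)⟩]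

theorem map (f : F →* F') (h : AreaLE R n w) : AreaLE (f '' R) n (f w) := by
  obtain ⟨l, rfl, hl, hc⟩ := h
  refine ⟨l.map f, map_list_prod f l, by simpa using hl, ?_⟩
  simp only [List.mem_map]
  rintro _ ⟨g, hg, rfl⟩
  obtain ⟨r, hr, c, rfl | rfl⟩ := hc g hg
  exacts [⟨f r, ⟨r, hr, rfl⟩, f c, Or.inl (by simp)⟩, ⟨f r, ⟨r, hr, rfl⟩, f c, Or.inr (by simp)⟩]

theorem conj (c : F) (h : AreaLE R n w) : AreaLE R n (c * w * c⁻¹) := by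
  obtain ⟨l, rfl, hl, hc⟩ := h
  refine ⟨l.map (MulAut.conj c), by rw [← map_list_prod, MulAut.conj_apply], by simpa using hl, ?_⟩
  simp only [List.mem_map]
  rintro _ ⟨g, hg, rfl⟩
  obtain ⟨r, hr, c', rfl | rfl⟩ := hc g hg
  exacts [⟨r, hr, c * c', Or.inl (by simp; group)⟩, ⟨r, hr, c * c', Or.inr (by simp; group)⟩]

theorem insert_middle (hv : AreaLE R m v) (h : AreaLE R n (u * w)) :
    AreaLE R (m + n) (u * v * w) := by
  simpa [mul_assoc] using (hv.conj u).mul h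

theorem mem_normalClosure (h : AreaLE R n w) : w ∈ Subgroup.normalClosure R := by
  obtain ⟨l, rfl, -, hc⟩ := h
  refine list_prod_mem fun g hg => ?_
  obtain ⟨r, hr, c, rfl | rfl⟩ := hc g hg
  · exact Subgroup.normalClosure_normal.conj_mem _ (Subgroup.subset_normalClosure hr) c
  · exact Subgroup.normalClosure_normal.conj_mem _
      (inv_mem (Subgroup.subset_normalClosure hr)) c

end AreaLE

end Area

theorem isHyperbolic_iff {G : Type*} [Group G] :
    IsHyperbolic G ↔ ∃ (X : Type) (_ : Finite X) (_ : DecidableEq X) (φ : FreeGroup X →* G)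
      (R : Finset (FreeGroup X)) (C D : ℕ), Function.Surjective φ ∧
      (R : Set (FreeGroup X)) ⊆ φ.ker ∧ ∀ w ∈ φ.ker, AreaLE R (C * w.norm + D) w := by
  constructor
  · rintro ⟨X, hX, hd, φ, R, C, D, hφ, hker, harea⟩
    exact ⟨X, hX, hd, φ, R, C, D, hφ, hker ▸ Subgroup.subset_normalClosure, harea⟩
  · rintro ⟨X, hX, hd, φ, R, C, D, hφ, hR, harea⟩
    refine ⟨X, hX, hd, φ, R, C, D, hφ, le_antisymm (fun w hw => ?_)
      (Subgroup.normalClosure_le_normal hR), harea⟩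
    exact (harea w hw).mem_normalClosure

namespace FreeGroup

variable {α β F : Type*} [Group F]

theorem mk_cons (p : α × Bool) (L : List (α × Bool)) : mk (p :: L) = mk [p] * mk L := by
  rw [mul_mk]; rfl

theorem mk_singleton (x : α) (b : Bool) : mk [(x, b)] = cond b (of x) (of x)⁻¹ := by
  cases b <;> rfl

theorem prod_map_mk_singleton (L : List (α × Bool)) : (L.map fun p => mk [p]).prod = mk L := by
  induction L with
  | nil => rfl
  | cons p L ih => rw [List.map_cons, List.prod_cons, ih, ← mk_cons]

variable [DecidableEq α] [DecidableEq β]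

theorem norm_map_le (f : FreeGroup α →* FreeGroup β) {A : ℕ} (hA : ∀ x, (f (of x)).norm ≤ A)
    (w : FreeGroup α) : (f w).norm ≤ A * w.norm := by
  suffices ∀ L : List (α × Bool), (f (mk L)).norm ≤ A * L.length by
    have h := this w.toWord
    rwa [mk_toWord] at h
  intro L
  induction L with
  | nil => simp [← one_eq_mk]
  | cons p L ih =>
    have hp : (f (mk [p])).norm ≤ A := by
      obtain ⟨x, _ | _⟩ := p <;> simpa [mk_singleton] using hA x
    calc (f (mk (p :: L))).norm ≤ (f (mk [p])).norm + (f (mk L)).norm := by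
          rw [mk_cons, _root_.map_mul]; exact norm_mul_le _ _
      _ ≤ A * (p :: L).length := by rw [List.length_cons]; linarith

theorem areaLE_mul_inv (f g : FreeGroup α →* F) (w : FreeGroup α) :
    AreaLE (Set.range fun x => f (of x) * (g (of x))⁻¹) w.norm (f w * (g w)⁻¹) := by
  suffices ∀ L : List (α × Bool), AreaLE (Set.range fun x => f (of x) * (g (of x))⁻¹) L.length
      (f (mk L) * (g (mk L))⁻¹) by
    have h := this w.toWord
    rwa [mk_toWord] at h
  intro L
  induction L with
  | nil => simpa [← one_eq_mk] using AreaLE.one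
  | cons p L ih =>
    have hp : AreaLE (Set.range fun x => f (of x) * (g (of x))⁻¹) 1
        (f (mk [p]) * (g (mk [p]))⁻¹) := by
      obtain ⟨x, _ | _⟩ := p
      · have := (AreaLE.of_mem
          (Set.mem_range_self (f := fun x => f (of x) * (g (of x))⁻¹) x)).inv.conj (f (of x))⁻¹
        simpa [mk_singleton, mul_assoc] using this
      · simpa [mk_singleton] using AreaLE.of_mem (Set.mem_range_self x)
    have := (ih.conj (f (mk [p]))).mul hp
    rw [mk_cons, _root_.map_mul, _root_.map_mul, List.length_cons]
    convert this using 1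
    group

theorem areaLE_mk_of_ne_nil {φ : FreeGroup α →* F} {R : Set (FreeGroup α)} {C D : ℕ}
    (h : ∀ w ∈ φ.ker, AreaLE R (C * w.norm + D) w)
    {K : List (α × Bool)} (hK : K ≠ []) (hφK : φ (mk K) = 1) :
    AreaLE R ((C + D) * K.length) (mk K) := by
  refine (h _ hφK).mono subset_rfl ?_
  have h₁ : 1 ≤ K.length := List.length_pos_iff.2 hK
  have h₂ : (mk K).norm ≤ K.length := norm_mk_le
  nlinarith

end FreeGroup

open FreeGroup in
theorem IsHyperbolic.of_retract {G H : Type*} [Group G] [Group H] (i : H →* G) (r : G →* H)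
    (hri : Function.LeftInverse r i) (hG : IsHyperbolic G) : IsHyperbolic H := by
  classical
  obtain ⟨X, _, _, φ, R, C, D, hφ, hR, harea⟩ := isHyperbolic_iff.1 hG
  let _ : Fintype X := .ofFinite X
  let σ : FreeGroup X →* FreeGroup X :=
    FreeGroup.lift fun x => Function.surjInv hφ (i (r (φ (of x))))
  have hφσ (w : FreeGroup X) : φ (σ w) = i (r (φ w)) := by
    refine DFunLike.congr_fun (FreeGroup.ext_hom (φ.comp σ) ((i.comp r).comp φ) fun x => ?_) w
    simp [σ, Function.surjInv_eq hφ]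
  let A := Finset.univ.sup fun x => (σ (of x)).norm
  let T := Finset.univ.image fun x => of x * (σ (of x))⁻¹
  have hT : (Set.range fun x => of x * (σ (of x))⁻¹) = T := by simp [T]
  refine isHyperbolic_iff.2 ⟨X, inferInstance, inferInstance, r.comp φ, R ∪ T, C * A + 1, D,
    hri.surjective.comp hφ, ?_, fun w hw => ?_⟩
  · rw [Finset.coe_union, ← hT]
    refine Set.union_subset (fun ρ hρ => ?_) ?_
    · simp [MonoidHom.mem_ker.1 (hR hρ)]
    · rintro _ ⟨x, rfl⟩
      simp [hφσ, hri _]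
  · have hσw : σ w ∈ φ.ker := by
      rw [MonoidHom.mem_ker, hφσ, show r (φ w) = 1 from hw, _root_.map_one]
    have hnorm : (σ w).norm ≤ A * w.norm :=
      norm_map_le σ (fun x => Finset.le_sup (f := fun x => (σ (of x)).norm) (Finset.mem_univ x)) w
    have hsplit := ((areaLE_mul_inv (.id _) σ w).mono (hT.trans_subset Set.subset_union_right)
      le_rfl).mul ((harea _ hσw).mono Set.subset_union_left le_rfl)
    refine (by simpa using hsplit : AreaLE _ _ w).mono subset_rfl ?_
    calc w.norm + (C * (σ w).norm + D) ≤ w.norm + (C * (A * w.norm) + D) := by gcongr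
      _ = (C * A + 1) * w.norm + D := by ring

section FreeProduct

open FreeGroup Monoid.Coprod

variable {G₁ G₂ X₁ X₂ : Type*} [Group G₁] [Group G₂]

def sumLift (φ₁ : FreeGroup X₁ →* G₁) (φ₂ : FreeGroup X₂ →* G₂) :
    FreeGroup (X₁ ⊕ X₂) →* G₁ ∗ G₂ :=
  FreeGroup.lift (Sum.elim (fun x => inl (φ₁ (of x))) (fun x => inr (φ₂ (of x))))

/-- Words in the free group on `X₁ ⊕ X₂`, with each letter sorted into the alphabet of its factor,
so that the maximal subwords over a single `Xᵢ` are the syllables of the list. -/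
def sumWord (L : List ((X₁ × Bool) ⊕ (X₂ × Bool))) : FreeGroup (X₁ ⊕ X₂) :=
  mk (L.map (Equiv.sumProdDistrib X₁ X₂ Bool).symm)

variable {φ₁ : FreeGroup X₁ →* G₁} {φ₂ : FreeGroup X₂ →* G₂}

theorem sumLift_map_inl (w : FreeGroup X₁) :
    sumLift φ₁ φ₂ (FreeGroup.map Sum.inl w) = inl (φ₁ w) :=
  DFunLike.congr_fun (ext_hom ((sumLift φ₁ φ₂).comp (FreeGroup.map Sum.inl)) (inl.comp φ₁)
    fun x => by simp [sumLift]) w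

theorem sumLift_map_inr (w : FreeGroup X₂) :
    sumLift φ₁ φ₂ (FreeGroup.map Sum.inr w) = inr (φ₂ w) :=
  DFunLike.congr_fun (ext_hom ((sumLift φ₁ φ₂).comp (FreeGroup.map Sum.inr)) (inr.comp φ₂)
    fun x => by simp [sumLift]) w

theorem sumLift_surjective (h₁ : Function.Surjective φ₁) (h₂ : Function.Surjective φ₂) :
    Function.Surjective (sumLift φ₁ φ₂) := by
  intro g
  induction g using Monoid.Coprod.induction_on with
  | inl g => obtain ⟨w, rfl⟩ := h₁ g; exact ⟨_, sumLift_map_inl w⟩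
  | inr g => obtain ⟨w, rfl⟩ := h₂ g; exact ⟨_, sumLift_map_inr w⟩
  | mul x y hx hy =>
    obtain ⟨v, rfl⟩ := hx
    obtain ⟨w, rfl⟩ := hy
    exact ⟨v * w, _root_.map_mul _ v w⟩

theorem sumWord_append (L L' : List ((X₁ × Bool) ⊕ (X₂ × Bool))) :
    sumWord (L ++ L') = sumWord L * sumWord L' := by
  simp [sumWord, mul_mk]

theorem sumWord_map_inl (K : List (X₁ × Bool)) :
    sumWord (K.map .inl : List ((X₁ × Bool) ⊕ (X₂ × Bool))) = FreeGroup.map Sum.inl (mk K) := by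
  rw [sumWord, map.mk, List.map_map]
  rfl

theorem sumWord_map_inr (K : List (X₂ × Bool)) :
    sumWord (K.map .inr : List ((X₁ × Bool) ⊕ (X₂ × Bool))) = FreeGroup.map Sum.inr (mk K) := by
  rw [sumWord, map.mk, List.map_map]
  rfl

theorem sumLift_sumWord (L : List ((X₁ × Bool) ⊕ (X₂ × Bool))) :
    sumLift φ₁ φ₂ (sumWord L) =
      (L.map (Sum.elim (inl ∘ fun p => φ₁ (mk [p])) (inr ∘ fun p => φ₂ (mk [p])))).prod := by
  rw [sumWord, ← prod_map_mk_singleton, map_list_prod, List.map_map, List.map_map]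
  congr 1
  refine List.map_congr_left fun p _ => ?_
  rcases p with p | p
  · simpa [sumWord] using sumLift_map_inl (φ₂ := φ₂) (mk [p])
  · simpa [sumWord] using sumLift_map_inr (φ₁ := φ₁) (mk [p])

variable [DecidableEq X₁] [DecidableEq X₂]

theorem exists_sumWord_eq (w : FreeGroup (X₁ ⊕ X₂)) : ∃ L, sumWord L = w ∧ L.length = w.norm :=
  ⟨w.toWord.map (Equiv.sumProdDistrib X₁ X₂ Bool), by simp [sumWord, mk_toWord],
    by rw [List.length_map]; rfl⟩

variable {R₁ : Set (FreeGroup X₁)} {R₂ : Set (FreeGroup X₂)} {C₁ D₁ C₂ D₂ : ℕ}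

theorem exists_trivial_subword (h₁ : ∀ w ∈ φ₁.ker, AreaLE R₁ (C₁ * w.norm + D₁) w)
    (h₂ : ∀ w ∈ φ₂.ker, AreaLE R₂ (C₂ * w.norm + D₂) w)
    {L : List ((X₁ × Bool) ⊕ (X₂ × Bool))} (hne : L ≠ []) (hL : sumLift φ₁ φ₂ (sumWord L) = 1) :
    ∃ P M Q, L = P ++ M ++ Q ∧ M ≠ [] ∧ sumLift φ₁ φ₂ (sumWord M) = 1 ∧
      AreaLE (FreeGroup.map Sum.inl '' R₁ ∪ FreeGroup.map Sum.inr '' R₂)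
        ((C₁ + D₁ + (C₂ + D₂)) * M.length) (sumWord M) := by
  obtain ⟨P, Q, ⟨K, hK, rfl, hK1⟩ | ⟨K, hK, rfl, hK1⟩⟩ :=
    exists_trivial_syllable _ _ hne ((sumLift_sumWord L).symm.trans hL)
  · replace hK1 : φ₁ (mk K) = 1 := by
      rwa [← prod_map_mk_singleton K, _root_.map_list_prod, List.map_map]
    refine ⟨P, _, Q, rfl, by simpa using hK, by
      rw [sumWord_map_inl, sumLift_map_inl, hK1, _root_.map_one], ?_⟩
    rw [sumWord_map_inl, List.length_map]
    exact ((areaLE_mk_of_ne_nil h₁ hK hK1).map _).mono Set.subset_union_left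
      (Nat.mul_le_mul_right _ (by omega))
  · replace hK1 : φ₂ (mk K) = 1 := by
      rwa [← prod_map_mk_singleton K, _root_.map_list_prod, List.map_map]
    refine ⟨P, _, Q, rfl, by simpa using hK, by
      rw [sumWord_map_inr, sumLift_map_inr, hK1, _root_.map_one], ?_⟩
    rw [sumWord_map_inr, List.length_map]
    exact ((areaLE_mk_of_ne_nil h₂ hK hK1).map _).mono Set.subset_union_right
      (Nat.mul_le_mul_right _ (by omega))

theorem areaLE_sumWord (h₁ : ∀ w ∈ φ₁.ker, AreaLE R₁ (C₁ * w.norm + D₁) w)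
    (h₂ : ∀ w ∈ φ₂.ker, AreaLE R₂ (C₂ * w.norm + D₂) w)
    (L : List ((X₁ × Bool) ⊕ (X₂ × Bool))) (hL : sumLift φ₁ φ₂ (sumWord L) = 1) :
    AreaLE (FreeGroup.map Sum.inl '' R₁ ∪ FreeGroup.map Sum.inr '' R₂)
      ((C₁ + D₁ + (C₂ + D₂)) * L.length) (sumWord L) := by
  rcases eq_or_ne L [] with rfl | hne
  · exact AreaLE.one
  obtain ⟨P, M, Q, rfl, hM, hM1, hMarea⟩ := exists_trivial_subword h₁ h₂ hne hL
  have hPQ : sumLift φ₁ φ₂ (sumWord (P ++ Q)) = 1 := by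
    simpa [sumWord_append, hM1] using hL
  have h := hMarea.insert_middle (sumWord_append P Q ▸ areaLE_sumWord h₁ h₂ (P ++ Q) hPQ)
  rw [sumWord_append, sumWord_append]
  refine h.mono subset_rfl (le_of_eq ?_)
  simp only [List.length_append]
  ring
termination_by L.length
decreasing_by subst_vars; simp [List.length_pos_iff.2 hM]

theorem IsHyperbolic.coprod (h₁ : IsHyperbolic G₁) (h₂ : IsHyperbolic G₂) :
    IsHyperbolic (G₁ ∗ G₂) := by
  classical
  obtain ⟨X₁, _, _, φ₁, R₁, C₁, D₁, hφ₁, hR₁, harea₁⟩ := isHyperbolic_iff.1 h₁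
  obtain ⟨X₂, _, _, φ₂, R₂, C₂, D₂, hφ₂, hR₂, harea₂⟩ := isHyperbolic_iff.1 h₂
  refine isHyperbolic_iff.2 ⟨X₁ ⊕ X₂, inferInstance, inferInstance, sumLift φ₁ φ₂,
    R₁.image (FreeGroup.map Sum.inl) ∪ R₂.image (FreeGroup.map Sum.inr), C₁ + D₁ + (C₂ + D₂), 0,
    sumLift_surjective hφ₁ hφ₂, ?_, fun w hw => ?_⟩
  · rw [Finset.coe_union, Finset.coe_image, Finset.coe_image]
    refine Set.union_subset ?_ ?_ <;> rintro _ ⟨ρ, hρ, rfl⟩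
    · simp [sumLift_map_inl, MonoidHom.mem_ker.1 (hR₁ hρ)]
    · simp [sumLift_map_inr, MonoidHom.mem_ker.1 (hR₂ hρ)]
  · obtain ⟨L, rfl, hL⟩ := exists_sumWord_eq w
    simpa [hL] using areaLE_sumWord harea₁ harea₂ L hw

end FreeProduct

open Monoid in
theorem coprod_isHyperbolic_iff_general (G1 G2 : Type*) [Group G1] [Group G2] :
    IsHyperbolic (Coprod G1 G2) ↔ IsHyperbolic G1 ∧ IsHyperbolic G2 :=
  ⟨fun h => ⟨h.of_retract Coprod.inl Coprod.fst fun x => Coprod.fst_apply_inl x,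
      h.of_retract Coprod.inr Coprod.snd fun x => Coprod.snd_apply_inr x⟩,
    fun ⟨h₁, h₂⟩ => h₁.coprod h₂⟩

open Monoid in
/-- For finitely generated groups, the free product `G1 * G2` is hyperbolic if and only if
both `G1` and `G2` are hyperbolic. -/
theorem coprod_isHyperbolic_iff (G1 G2 : Type*) [Group G1] [Group G2]
    [Group.FG G1] [Group.FG G2] :
    IsHyperbolic (Coprod G1 G2) ↔ IsHyperbolic G1 ∧ IsHyperbolic G2 :=
  coprod_isHyperbolic_iff_general G1 G2
end

section
/- In the free group F_2 = ⟨α, β⟩, the element α^m β^n with m, n ≥ 2 is not primitive. -/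
/-!
If `w` is primitive in `F₂`, it is one of two basis elements, so killing `w` leaves a cyclic
quotient: every homomorphism with `φ w = 1` has commutative image. But `α ↦ x`, `β ↦ y` kills
`α^m β^n` whenever `x^m = y^n = 1`, and such `x`, `y` need not commute: on `ZMod n × ZMod m`
let `x` rotate the fibre over `0` and `y` rotate the base.
-/

universe u

namespace FreeGroupBasis

variable {ι ι' G H : Type*} [Group G] [Group H]

theorem nonempty_equiv_of_finite [Finite ι] (b : FreeGroupBasis ι G) (b' : FreeGroupBasis ι' G) :
    Nonempty (ι ≃ ι') := by
  -- `G` has `2 ^ |ι|` homomorphisms to `ℤ/2`.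
  let e : (ι → Multiplicative (ZMod 2)) ≃ (ι' → Multiplicative (ZMod 2)) :=
    b.lift.trans b'.lift.symm
  have : Finite (ι' → Multiplicative (ZMod 2)) := Finite.of_equiv _ e
  have : Finite ι' := by
    by_contra h
    have := not_finite_iff_infinite.mp h
    exact not_finite (ι' → Multiplicative (ZMod 2))
  have hcard := Nat.card_congr e
  rw [Nat.card_fun, Nat.card_fun, Nat.card_congr Multiplicative.toAdd, Nat.card_zmod] at hcard
  exact Finite.card_eq.mp (Nat.pow_right_injective le_rfl hcard)

theorem map_mem_zpowers (b : FreeGroupBasis ι G) (φ : G →* H) (j : ι)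
    (h : ∀ k ≠ j, φ (b k) = 1) (x : G) : φ x ∈ Subgroup.zpowers (φ (b j)) := by
  rw [← b.repr.symm_apply_apply x]
  induction b.repr x using FreeGroup.induction_on with
  | C1 => simp
  | of k =>
    change φ (b k) ∈ _
    by_cases hk : k = j
    · exact hk ▸ Subgroup.mem_zpowers _
    · exact h k hk ▸ one_mem _
  | mul x y hx hy => simpa only [map_mul] using mul_mem hx hy
  | inv_of x hx => simpa only [map_inv] using inv_mem hx

end FreeGroupBasis

theorem IsPrimitive.commute_of_map_eq_one {H : Type*} [Group H] {w : FreeGroup (Fin 2)}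
    (hw : IsPrimitive w) (φ : FreeGroup (Fin 2) →* H) (hφ : φ w = 1) (x y : FreeGroup (Fin 2)) :
    Commute (φ x) (φ y) := by
  obtain ⟨S, b, i, rfl⟩ := hw
  obtain ⟨e⟩ := (FreeGroupBasis.ofFreeGroup (Fin 2)).nonempty_equiv_of_finite b
  let c := b.reindex e.symm
  have hc : ∀ k ≠ e.symm i + 1, φ (c k) = 1 := by
    have fin_two_eq : ∀ a k : Fin 2, k ≠ a + 1 → k = a := by decide
    intro k hk
    simpa [c, fin_two_eq _ k hk] using hφ
  obtain ⟨k, hk⟩ := c.map_mem_zpowers φ _ hc x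
  obtain ⟨l, hl⟩ := c.map_mem_zpowers φ _ hc y
  exact hk ▸ hl ▸ Commute.zpow_zpow_self _ k l

def fiberRotation (m n : ℕ) : Equiv.Perm (ZMod n × ZMod m) where
  toFun p := (p.1, p.2 + if p.1 = 0 then 1 else 0)
  invFun p := (p.1, p.2 - if p.1 = 0 then 1 else 0)
  left_inv p := by simp
  right_inv p := by simp

def baseRotation (m n : ℕ) : Equiv.Perm (ZMod n × ZMod m) where
  toFun p := (p.1 + 1, p.2)
  invFun p := (p.1 - 1, p.2)
  left_inv p := by simp
  right_inv p := by simp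

theorem fiberRotation_pow_apply (m n k : ℕ) (p : ZMod n × ZMod m) :
    (fiberRotation m n ^ k) p = (p.1, p.2 + if p.1 = 0 then (k : ZMod m) else 0) := by
  induction k with
  | zero => simp
  | succ k ih =>
    rw [pow_succ', Equiv.Perm.mul_apply, ih]
    by_cases h : p.1 = 0 <;> simp [fiberRotation, h, add_assoc]

theorem baseRotation_pow_apply (m n k : ℕ) (p : ZMod n × ZMod m) :
    (baseRotation m n ^ k) p = (p.1 + k, p.2) := by
  induction k with
  | zero => simp
  | succ k ih =>
    rw [pow_succ', Equiv.Perm.mul_apply, ih]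
    simp [baseRotation, add_assoc]

theorem fiberRotation_pow_self (m n : ℕ) : fiberRotation m n ^ m = 1 := by
  ext p <;> simp [fiberRotation_pow_apply]

theorem baseRotation_pow_self (m n : ℕ) : baseRotation m n ^ n = 1 := by
  ext p <;> simp [baseRotation_pow_apply]

theorem not_commute_fiberRotation_baseRotation {m n : ℕ} (hm : 2 ≤ m) (hn : 2 ≤ n) :
    ¬ Commute (fiberRotation m n) (baseRotation m n) := by
  have : Fact (1 < m) := ⟨hm⟩
  have : Fact (1 < n) := ⟨hn⟩
  intro h
  have h00 := congrArg Prod.snd (DFunLike.congr_fun h.eq (0, 0))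
  simp [fiberRotation, baseRotation] at h00

/-- In the free group `F₂ = ⟨α, β⟩`, the element `α^m β^n` with `m, n ≥ 2` is not primitive. -/
theorem not_primitive_am_bn (m n : ℕ) (hm : 2 ≤ m) (hn : 2 ≤ n) :
    ¬ IsPrimitive ((FreeGroup.of 0 : FreeGroup (Fin 2)) ^ m * (FreeGroup.of 1) ^ n) := by
  intro hw
  let φ := FreeGroup.lift ![fiberRotation m n, baseRotation m n]
  have hφw : φ ((FreeGroup.of 0) ^ m * (FreeGroup.of 1) ^ n) = 1 := by
    simp [φ, fiberRotation_pow_self, baseRotation_pow_self]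
  have := hw.commute_of_map_eq_one φ hφw (FreeGroup.of 0) (FreeGroup.of 1)
  exact not_commute_fiberRotation_baseRotation hm hn (by simpa [φ] using this)
end
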